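/- arXiv:2209.07867 — 4 statements merged into one kernel-verified Lean document; each statement's English description precedes it below -/
import Mathlib

section
/- Let C be a compact closed symmetric monoidal category in which every object is self-dual (i.e., C has cups η_A : I → A⊗A and caps ε_A : A⊗A → I satisfying the snake equations). If the monoidal unit I is terminal, then for any two objects A, B there is exactly one morphism A → B. -/
/-!
Bending a wire with the cup `η B` turns a morphism `e : A ⊗ B ⟶ 𝟙_ C` into a
morphism `A ⟶ B`, and by the snake equation every `g : A ⟶ B` arises this way from
`e = g ▷ B ≫ ε B`. When `𝟙_ C` is terminal there is only one such `e`, hence only one `g`.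
-/

open CategoryTheory MonoidalCategory Limits

namespace CategoryTheory.MonoidalCategory

variable {C : Type*} [Category C] [MonoidalCategory C] {A B : C}

def cupTranspose (η : 𝟙_ C ⟶ B ⊗ B) (e : A ⊗ B ⟶ 𝟙_ C) : A ⟶ B :=
  (ρ_ A).inv ≫ (A ◁ η) ≫ (α_ A B B).inv ≫ (e ▷ B) ≫ (λ_ B).hom

theorem cupTranspose_whiskerRight_comp (η : 𝟙_ C ⟶ B ⊗ B) (ε : B ⊗ B ⟶ 𝟙_ C)
    (snake : (ρ_ B).inv ≫ (B ◁ η) ≫ (α_ B B B).inv ≫ (ε ▷ B) ≫ (λ_ B).hom = 𝟙 B)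
    (g : A ⟶ B) : cupTranspose η (g ▷ B ≫ ε) = g := by
  calc cupTranspose η (g ▷ B ≫ ε)
      = g ≫ (ρ_ B).inv ≫ (B ◁ η) ≫ (α_ B B B).inv ≫ (ε ▷ B) ≫ (λ_ B).hom := by
        simp only [cupTranspose, comp_whiskerRight, Category.assoc]
        -- slide `g` leftwards past the unitor, the cup (interchange law) and the associator
        rw [← Category.assoc g, rightUnitor_inv_naturality, Category.assoc,
          ← Category.assoc (g ▷ 𝟙_ C), ← whisker_exchange, Category.assoc,
          ← Category.assoc (g ▷ (B ⊗ B)), associator_inv_naturality_left, Category.assoc]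
    _ = g := by rw [snake, Category.comp_id]

end CategoryTheory.MonoidalCategory

theorem timeNeutral_causal_unique_morphism_general {C : Type*} [Category C] [MonoidalCategory C]
    (η : ∀ X : C, 𝟙_ C ⟶ X ⊗ X) (ε : ∀ X : C, X ⊗ X ⟶ 𝟙_ C)
    (snake₂ : ∀ X : C,
      (ρ_ X).inv ≫ (X ◁ η X) ≫ (α_ X X X).inv ≫ (ε X ▷ X) ≫ (λ_ X).hom = 𝟙 X)
    (hT : IsTerminal (𝟙_ C)) (A B : C) :
    ∃ f : A ⟶ B, ∀ g : A ⟶ B, g = f := by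
  refine ⟨cupTranspose (η B) (hT.from (A ⊗ B)), fun g => ?_⟩
  rw [← cupTranspose_whiskerRight_comp (η B) (ε B) (snake₂ B) g]
  exact congrArg _ (hT.hom_ext _ _)

/-- Let `C` be a compact closed symmetric monoidal category in which every object is
self-dual, i.e. there are cups `η_A : I ⟶ A ⊗ A` and caps `ε_A : A ⊗ A ⟶ I`
satisfying the snake equations. If the monoidal unit `I` is terminal, then for any two
objects `A`, `B` there is exactly one morphism `A ⟶ B`. -/
theorem timeNeutral_causal_unique_morphism {C : Type*} [Category C] [MonoidalCategory C]
    [SymmetricCategory C]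
    (η : ∀ X : C, 𝟙_ C ⟶ X ⊗ X) (ε : ∀ X : C, X ⊗ X ⟶ 𝟙_ C)
    (snake₁ : ∀ X : C,
      (λ_ X).inv ≫ (η X ▷ X) ≫ (α_ X X X).hom ≫ (X ◁ ε X) ≫ (ρ_ X).hom = 𝟙 X)
    (snake₂ : ∀ X : C,
      (ρ_ X).inv ≫ (X ◁ η X) ≫ (α_ X X X).inv ≫ (ε X ▷ X) ≫ (λ_ X).hom = 𝟙 X)
    (hT : IsTerminal (𝟙_ C)) (A B : C) :
    ∃ f : A ⟶ B, ∀ g : A ⟶ B, g = f :=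
  timeNeutral_causal_unique_morphism_general η ε snake₂ hT A B
end

section
/- In a compact closed symmetric monoidal category where every object is self-dual via cups η_A and caps ε_A, the assignment f ↦ (ε_B ⊗ id_A) ∘ (id_B ⊗ f ⊗ id_A) ∘ (id_B ⊗ η_A) (suitably bracketed) on morphisms f : A → B defines an involutive contravariant identity-on-objects functor, i.e., a dagger. Hence any time-neutral theory is time-symmetric. -/
/-!
`bendDag f` is characterised by sliding along the cup: it is the unique `g` with
`η_B ≫ (B ◁ g) = η_A ≫ (f ▷ A)` (one snake equation gives existence, the other uniqueness),
and functoriality follows from this characterisation. Conjugating the sliding equation by the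
braiding, which fixes the cups, moves `bendDag f` to the other leg of the cup; the
characterisation applied to `bendDag f` then returns `f`.
-/

open CategoryTheory MonoidalCategory

def bendDag {C : Type*} [Category C] [MonoidalCategory C]
    (η : ∀ X : C, 𝟙_ C ⟶ X ⊗ X) (ε : ∀ X : C, X ⊗ X ⟶ 𝟙_ C)
    {A B : C} (f : A ⟶ B) : B ⟶ A :=
  (ρ_ B).inv ≫ (B ◁ η A) ≫ (B ◁ (f ▷ A)) ≫ (α_ B B A).inv ≫ (ε B ▷ A) ≫ (λ_ A).hom

section BendDag

variable {C : Type*} [Category C] [MonoidalCategory C]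
  (η : ∀ X : C, 𝟙_ C ⟶ X ⊗ X) (ε : ∀ X : C, X ⊗ X ⟶ 𝟙_ C)

def SnakeEquation₁ : Prop :=
  ∀ X : C, (λ_ X).inv ≫ (η X ▷ X) ≫ (α_ X X X).hom ≫ (X ◁ ε X) ≫ (ρ_ X).hom = 𝟙 X

def SnakeEquation₂ : Prop :=
  ∀ X : C, (ρ_ X).inv ≫ (X ◁ η X) ≫ (α_ X X X).inv ≫ (ε X ▷ X) ≫ (λ_ X).hom = 𝟙 X

variable {η ε}

theorem cup_comp_whiskerLeft_bendDag (snake₁ : SnakeEquation₁ η ε) {A B : C} (f : A ⟶ B) :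
    η B ≫ B ◁ bendDag η ε f = η A ≫ f ▷ A := by
  have snake : η B ▷ B ⊗≫ B ◁ ε B = ⊗𝟙.hom := by
    rw [← cancel_epi (λ_ B).inv, ← cancel_mono (ρ_ B).hom]
    simpa [monoidalComp] using snake₁ B
  calc η B ≫ B ◁ bendDag η ε f
      = 𝟙 _ ⊗≫ (η B ▷ 𝟙_ C ≫ (B ⊗ B) ◁ (η A ≫ f ▷ A)) ⊗≫ B ◁ ε B ▷ A ⊗≫ 𝟙 _ := by
        rw [bendDag]; monoidal
    _ = 𝟙 _ ⊗≫ (𝟙_ C ◁ (η A ≫ f ▷ A) ≫ η B ▷ (B ⊗ A)) ⊗≫ B ◁ ε B ▷ A ⊗≫ 𝟙 _ := by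
        rw [whisker_exchange]
    _ = (η A ≫ f ▷ A) ⊗≫ (η B ▷ B ⊗≫ B ◁ ε B) ▷ A ⊗≫ 𝟙 _ := by monoidal
    _ = η A ≫ f ▷ A := by rw [snake]; monoidal

theorem bendDag_eq_of_cup_comp_whiskerLeft (snake₂ : SnakeEquation₂ η ε) {A B : C}
    {f : A ⟶ B} {g : B ⟶ A} (h : η B ≫ B ◁ g = η A ≫ f ▷ A) : bendDag η ε f = g :=
  calc bendDag η ε f
      = (ρ_ B).inv ≫ B ◁ (η B ≫ B ◁ g) ≫ (α_ B B A).inv ≫ ε B ▷ A ≫ (λ_ A).hom := by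
        rw [h, bendDag, whiskerLeft_comp_assoc]
    _ = ((ρ_ B).inv ≫ (B ◁ η B) ≫ (α_ B B B).inv ≫ (ε B ▷ B) ≫ (λ_ B).hom) ≫ g := by
        simp only [whiskerLeft_comp, Category.assoc, associator_inv_naturality_right_assoc,
          whisker_exchange_assoc, leftUnitor_naturality]
    _ = g := by rw [snake₂, Category.id_comp]

theorem bendDag_id (snake₂ : SnakeEquation₂ η ε) (A : C) : bendDag η ε (𝟙 A) = 𝟙 A :=
  bendDag_eq_of_cup_comp_whiskerLeft snake₂ (by simp)

theorem bendDag_comp (snake₁ : SnakeEquation₁ η ε) (snake₂ : SnakeEquation₂ η ε) {A B D : C}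
    (f : A ⟶ B) (g : B ⟶ D) : bendDag η ε (f ≫ g) = bendDag η ε g ≫ bendDag η ε f :=
  bendDag_eq_of_cup_comp_whiskerLeft snake₂ <| by
    rw [whiskerLeft_comp, reassoc_of% cup_comp_whiskerLeft_bendDag snake₁ g,
      ← whisker_exchange, reassoc_of% cup_comp_whiskerLeft_bendDag snake₁ f, comp_whiskerRight]

variable [BraidedCategory C]

theorem cup_comp_whiskerRight_bendDag (snake₁ : SnakeEquation₁ η ε)
    (hsym : ∀ X : C, η X ≫ (β_ X X).hom = η X) {A B : C} (f : A ⟶ B) :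
    η B ≫ bendDag η ε f ▷ B = η A ≫ A ◁ f :=
  calc η B ≫ bendDag η ε f ▷ B
      = η B ≫ (β_ B B).hom ≫ bendDag η ε f ▷ B := by rw [reassoc_of% hsym B]
    _ = (η B ≫ B ◁ bendDag η ε f) ≫ (β_ B A).hom := by
        rw [Category.assoc, BraidedCategory.braiding_naturality_right]
    _ = η A ≫ (β_ A A).hom ≫ A ◁ f := by
        rw [cup_comp_whiskerLeft_bendDag snake₁, Category.assoc,
          BraidedCategory.braiding_naturality_left]
    _ = η A ≫ A ◁ f := by rw [reassoc_of% hsym A]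

theorem bendDag_bendDag (snake₁ : SnakeEquation₁ η ε) (snake₂ : SnakeEquation₂ η ε)
    (hsym : ∀ X : C, η X ≫ (β_ X X).hom = η X) {A B : C} (f : A ⟶ B) :
    bendDag η ε (bendDag η ε f) = f :=
  bendDag_eq_of_cup_comp_whiskerLeft snake₂ (cup_comp_whiskerRight_bendDag snake₁ hsym f).symm

end BendDag

/-- In a compact closed symmetric monoidal category in which every object is self-dual
via cups `η` and caps `ε` (satisfying the snake equations and the symmetry condition
`σ_{A,A} ∘ η_A = η_A`), the wire-bending assignment `bendDag` defines an involutive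
contravariant identity-on-objects functor, i.e. a dagger. Hence any time-neutral
theory is time-symmetric. -/
theorem bendDag_is_dagger {C : Type*} [Category C] [MonoidalCategory C]
    [SymmetricCategory C]
    (η : ∀ X : C, 𝟙_ C ⟶ X ⊗ X) (ε : ∀ X : C, X ⊗ X ⟶ 𝟙_ C)
    (snake₁ : ∀ X : C,
      (λ_ X).inv ≫ (η X ▷ X) ≫ (α_ X X X).hom ≫ (X ◁ ε X) ≫ (ρ_ X).hom = 𝟙 X)
    (snake₂ : ∀ X : C,
      (ρ_ X).inv ≫ (X ◁ η X) ≫ (α_ X X X).inv ≫ (ε X ▷ X) ≫ (λ_ X).hom = 𝟙 X)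
    (hsym : ∀ X : C, η X ≫ (β_ X X).hom = η X) :
    (∀ A : C, bendDag η ε (𝟙 A) = 𝟙 A) ∧
      (∀ {A B D : C} (f : A ⟶ B) (g : B ⟶ D),
        bendDag η ε (f ≫ g) = bendDag η ε g ≫ bendDag η ε f) ∧
      (∀ {A B : C} (f : A ⟶ B), bendDag η ε (bendDag η ε f) = f) :=
  ⟨bendDag_id snake₂, bendDag_comp snake₁ snake₂, bendDag_bendDag snake₁ snake₂ hsym⟩
end

section
/- Define a modified composition on CP maps by F • E = (1/N) F∘E if the scalar N := tr∘F∘E∘(maximally mixed input and discarded output normalization) is nonzero, and F • E = 0 otherwise; restrict to CP maps E satisfying tr(E(1/dim)) = 1 or E = 0. Then • is associative on this restricted set. -/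
open Matrix
open scoped ComplexOrder Classical

/-- Ampliation `id_γ ⊗ Φ` of a map between matrix algebras. -/
def ampL (γ : Type) {α β : Type}
    (Φ : Matrix α α ℂ → Matrix β β ℂ)
    (A : Matrix (γ × α) (γ × α) ℂ) : Matrix (γ × β) (γ × β) ℂ :=
  Matrix.of fun p q => Φ (Matrix.of fun a b => A (p.1, a) (q.1, b)) p.2 q.2

/-- Complete positivity. -/
def IsCP {α β : Type} [Fintype α] [Fintype β]
    (Φ : Matrix α α ℂ → Matrix β β ℂ) : Prop :=
  ∀ (n : ℕ) (A : Matrix (Fin n × α) (Fin n × α) ℂ),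
    A.PosSemidef → (ampL (Fin n) Φ A).PosSemidef

/-- The normalisation scalar `N(Φ)`: the trace of the output of `Φ` on the normalised
maximally mixed state. -/
noncomputable def Nval {α β : Type} [Fintype α] [DecidableEq α] [Fintype β]
    (Φ : Matrix α α ℂ →ₗ[ℂ] Matrix β β ℂ) : ℂ :=
  (Φ (((Fintype.card α : ℂ))⁻¹ • 1)).trace

/-- The modified ("renormalising") composition `F • E`: divide the usual composite by
its normalisation scalar when that scalar is nonzero, and return the zero map
otherwise. -/
noncomputable def bcomp {α β γ : Type}
    [Fintype α] [DecidableEq α] [Fintype β] [DecidableEq β] [Fintype γ]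
    (F : Matrix β β ℂ →ₗ[ℂ] Matrix γ γ ℂ) (E : Matrix α α ℂ →ₗ[ℂ] Matrix β β ℂ) :
    Matrix α α ℂ →ₗ[ℂ] Matrix γ γ ℂ :=
  if Nval (F ∘ₗ E) = 0 then 0 else (Nval (F ∘ₗ E))⁻¹ • (F ∘ₗ E)


/-!
Both sides are the composite `G ∘ F ∘ E` rescaled by its normalisation scalar, unless one of the
inner scalars `N(F ∘ E)`, `N(G ∘ F)` vanishes; it therefore suffices that each of these forces
`N(G ∘ F ∘ E) = 0`, and then both sides are zero. Write `ρ = E(1/d)`, a positive semidefinite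
matrix. A positive semidefinite matrix of trace zero is zero, so `N(F ∘ E) = tr F(ρ) = 0` gives
`F(ρ) = 0`, and `N(G ∘ F) = 0` gives `(G ∘ F)(1) = 0`; since `0 ≤ ρ ≤ (tr ρ) • 1`, positivity of
`G ∘ F` then gives `(G ∘ F)(ρ) = 0`.
-/

namespace Matrix

open scoped MatrixOrder

variable {𝕜 m n : Type*} [RCLike 𝕜] [Fintype m] [DecidableEq m]

theorem PosSemidef.le_trace_smul_one {A : Matrix m m 𝕜} (hA : A.PosSemidef) :
    A ≤ A.trace • (1 : Matrix m m 𝕜) := by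
  have hspec : ∀ x ∈ spectrum ℝ A, x ≤ RCLike.re A.trace := by
    rw [hA.1.spectrum_real_eq_range_eigenvalues, hA.1.trace_eq_sum_eigenvalues]
    rintro _ ⟨i, rfl⟩
    simpa using Finset.single_le_sum (fun j _ => hA.eigenvalues_nonneg j) (Finset.mem_univ i)
  have htrace_real : (RCLike.re A.trace : 𝕜) = A.trace := by
    rw [hA.1.trace_eq_sum_eigenvalues]
    simp
  have h := le_algebraMap_of_spectrum_le hspec (ha := hA.1)
  rwa [Algebra.algebraMap_eq_smul_one, RCLike.real_smul_eq_coe_smul (K := 𝕜), htrace_real] at h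

theorem map_eq_zero_of_map_one_eq_zero {Φ : Matrix m m 𝕜 →ₗ[𝕜] Matrix n n 𝕜}
    (hΦ : ∀ A, A.PosSemidef → (Φ A).PosSemidef) (h1 : Φ 1 = 0)
    {A : Matrix m m 𝕜} (hA : A.PosSemidef) : Φ A = 0 := by
  refine le_antisymm ?_ (hΦ A hA).nonneg
  rw [le_iff, zero_sub]
  simpa [h1] using hΦ _ hA.le_trace_smul_one

theorem posSemidef_inv_card_smul_one (α : Type*) [Fintype α] [DecidableEq α] :
    ((Fintype.card α : ℂ)⁻¹ • (1 : Matrix α α ℂ)).PosSemidef :=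
  PosSemidef.one.smul (inv_nonneg.2 (Nat.cast_nonneg _))

end Matrix

theorem IsCP.posSemidef {α β : Type} [Fintype α] [Fintype β]
    {Φ : Matrix α α ℂ → Matrix β β ℂ} (hΦ : IsCP Φ)
    {A : Matrix α α ℂ} (hA : A.PosSemidef) : (Φ A).PosSemidef := by
  have h := hΦ 1 _ (hA.submatrix (Prod.snd : Fin 1 × α → α))
  exact h.submatrix fun b => ((0 : Fin 1), b)

section Nval

variable {α β : Type} [Fintype α] [DecidableEq α] [Fintype β]

theorem Nval_smul (c : ℂ) (Φ : Matrix α α ℂ →ₗ[ℂ] Matrix β β ℂ) : Nval (c • Φ) = c * Nval Φ := by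
  simp only [Nval, LinearMap.smul_apply, Matrix.trace_smul, smul_eq_mul]

theorem map_one_eq_zero_of_Nval_eq_zero [Nonempty α] {Φ : Matrix α α ℂ →ₗ[ℂ] Matrix β β ℂ}
    (hΦ : ∀ A, A.PosSemidef → (Φ A).PosSemidef) (h : Nval Φ = 0) : Φ 1 = 0 := by
  have hc : (Fintype.card α : ℂ)⁻¹ ≠ 0 := by simp
  have h0 := (hΦ _ (Matrix.posSemidef_inv_card_smul_one α)).trace_eq_zero_iff.1 h
  rwa [map_smul, smul_eq_zero, or_iff_right hc] at h0

end Nval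

section bcomp

variable {α β γ δ : Type} [Fintype α] [DecidableEq α] [Fintype β] [DecidableEq β]
  [Fintype γ] [Fintype δ]

theorem bcomp_of_Nval_eq_zero {F : Matrix β β ℂ →ₗ[ℂ] Matrix γ γ ℂ}
    {E : Matrix α α ℂ →ₗ[ℂ] Matrix β β ℂ} (h : Nval (F ∘ₗ E) = 0) : bcomp F E = 0 :=
  if_pos h

theorem bcomp_of_Nval_ne_zero {F : Matrix β β ℂ →ₗ[ℂ] Matrix γ γ ℂ}
    {E : Matrix α α ℂ →ₗ[ℂ] Matrix β β ℂ} (h : Nval (F ∘ₗ E) ≠ 0) :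
    bcomp F E = (Nval (F ∘ₗ E))⁻¹ • (F ∘ₗ E) :=
  if_neg h

theorem bcomp_zero_right (F : Matrix β β ℂ →ₗ[ℂ] Matrix γ γ ℂ) :
    bcomp F (0 : Matrix α α ℂ →ₗ[ℂ] Matrix β β ℂ) = 0 :=
  bcomp_of_Nval_eq_zero (by simp [Nval])

theorem bcomp_zero_left (E : Matrix α α ℂ →ₗ[ℂ] Matrix β β ℂ) :
    bcomp (0 : Matrix β β ℂ →ₗ[ℂ] Matrix γ γ ℂ) E = 0 :=
  bcomp_of_Nval_eq_zero (by simp [Nval])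

theorem bcomp_smul_of_Nval_smul {F F' : Matrix β β ℂ →ₗ[ℂ] Matrix γ γ ℂ}
    {E E' : Matrix α α ℂ →ₗ[ℂ] Matrix β β ℂ} {c : ℂ} (hc : c ≠ 0)
    (hcomp : F' ∘ₗ E' = c • (F ∘ₗ E)) : bcomp F' E' = bcomp F E := by
  have hN : Nval (F' ∘ₗ E') = c * Nval (F ∘ₗ E) := by rw [hcomp, Nval_smul]
  by_cases h : Nval (F ∘ₗ E) = 0
  · rw [bcomp_of_Nval_eq_zero h, bcomp_of_Nval_eq_zero (by rw [hN, h, mul_zero])]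
  · rw [bcomp_of_Nval_ne_zero h, bcomp_of_Nval_ne_zero (by rw [hN]; exact mul_ne_zero hc h),
      hN, hcomp, smul_smul, _root_.mul_inv_rev, inv_mul_cancel_right₀ hc]

theorem bcomp_bcomp_right [DecidableEq γ] {E : Matrix α α ℂ →ₗ[ℂ] Matrix β β ℂ}
    {F : Matrix β β ℂ →ₗ[ℂ] Matrix γ γ ℂ} (G : Matrix γ γ ℂ →ₗ[ℂ] Matrix δ δ ℂ)
    (h : Nval (F ∘ₗ E) = 0 → Nval (G ∘ₗ F ∘ₗ E) = 0) :
    bcomp G (bcomp F E) = bcomp G (F ∘ₗ E) := by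
  by_cases h0 : Nval (F ∘ₗ E) = 0
  · rw [bcomp_of_Nval_eq_zero h0, bcomp_zero_right, bcomp_of_Nval_eq_zero (h h0)]
  · rw [bcomp_of_Nval_ne_zero h0]
    exact bcomp_smul_of_Nval_smul (inv_ne_zero h0) (LinearMap.comp_smul _ _ _)

theorem bcomp_bcomp_left [DecidableEq γ] (E : Matrix α α ℂ →ₗ[ℂ] Matrix β β ℂ)
    {F : Matrix β β ℂ →ₗ[ℂ] Matrix γ γ ℂ} {G : Matrix γ γ ℂ →ₗ[ℂ] Matrix δ δ ℂ}
    (h : Nval (G ∘ₗ F) = 0 → Nval ((G ∘ₗ F) ∘ₗ E) = 0) :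
    bcomp (bcomp G F) E = bcomp (G ∘ₗ F) E := by
  by_cases h0 : Nval (G ∘ₗ F) = 0
  · rw [bcomp_of_Nval_eq_zero h0, bcomp_zero_left, bcomp_of_Nval_eq_zero (h h0)]
  · rw [bcomp_of_Nval_ne_zero h0]
    exact bcomp_smul_of_Nval_smul (inv_ne_zero h0) (LinearMap.smul_comp _ _ _)

end bcomp

theorem bcomp_assoc_general {α β γ δ : Type}
    [Fintype α] [DecidableEq α] [Fintype β] [DecidableEq β] [Nonempty β]
    [Fintype γ] [DecidableEq γ] [Fintype δ]
    (E : Matrix α α ℂ →ₗ[ℂ] Matrix β β ℂ) (F : Matrix β β ℂ →ₗ[ℂ] Matrix γ γ ℂ)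
    (G : Matrix γ γ ℂ →ₗ[ℂ] Matrix δ δ ℂ)
    (hECP : IsCP ⇑E) (hFCP : IsCP ⇑F) (hGCP : IsCP ⇑G) :
    bcomp (bcomp G F) E = bcomp G (bcomp F E) := by
  have hρ : (E ((Fintype.card α : ℂ)⁻¹ • 1)).PosSemidef :=
    hECP.posSemidef (Matrix.posSemidef_inv_card_smul_one α)
  have hFE : Nval (F ∘ₗ E) = 0 → Nval (G ∘ₗ F ∘ₗ E) = 0 := fun h => by
    have hFρ : F (E ((Fintype.card α : ℂ)⁻¹ • 1)) = 0 :=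
      (hFCP.posSemidef hρ).trace_eq_zero_iff.1 h
    change (G (F (E _))).trace = 0
    rw [hFρ, map_zero, Matrix.trace_zero]
  have hGF : Nval (G ∘ₗ F) = 0 → Nval (G ∘ₗ F ∘ₗ E) = 0 := fun h => by
    have hGFpos : ∀ A, A.PosSemidef → ((G ∘ₗ F) A).PosSemidef :=
      fun A hA => hGCP.posSemidef (hFCP.posSemidef hA)
    have hGFρ := Matrix.map_eq_zero_of_map_one_eq_zero hGFpos
      (map_one_eq_zero_of_Nval_eq_zero hGFpos h) hρ
    change ((G ∘ₗ F) (E _)).trace = 0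
    rw [hGFρ, Matrix.trace_zero]
  rw [bcomp_bcomp_left E hGF, bcomp_bcomp_right G hFE]
  rfl

/-- On the set of completely positive maps `E` with `N(E) = 1` or `E = 0`, the modified
composition `•` (renormalise by the normalisation scalar, or return zero) is
associative: `(G • F) • E = G • (F • E)`. -/
theorem bcomp_assoc {α β γ δ : Type}
    [Fintype α] [DecidableEq α] [Nonempty α] [Fintype β] [DecidableEq β] [Nonempty β]
    [Fintype γ] [DecidableEq γ] [Nonempty γ] [Fintype δ] [DecidableEq δ] [Nonempty δ]
    (E : Matrix α α ℂ →ₗ[ℂ] Matrix β β ℂ) (F : Matrix β β ℂ →ₗ[ℂ] Matrix γ γ ℂ)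
    (G : Matrix γ γ ℂ →ₗ[ℂ] Matrix δ δ ℂ)
    (hECP : IsCP ⇑E) (hFCP : IsCP ⇑F) (hGCP : IsCP ⇑G)
    (hEn : Nval E = 1 ∨ E = 0) (hFn : Nval F = 1 ∨ F = 0) (hGn : Nval G = 1 ∨ G = 0) :
    bcomp (bcomp G F) E = bcomp G (bcomp F E) :=
  bcomp_assoc_general E F G hECP hFCP hGCP
end

section
/- In a symmetric monoidal category with dual objects, the class of morphisms satisfying the two no-signalling conditions (discarding all 'causal' outputs factorizes through discarding causal inputs, and preparing-then-marginalizing 'retrocausal' wires factorizes analogously) is closed under sequential composition. -/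
open CategoryTheory MonoidalCategory

/-! Each no-signalling condition says that a square commutes, with the discarding (resp.
preparing) maps as one pair of sides; the conditions for `F ≫ G` are obtained by pasting the
squares of `F` and `G` horizontally (resp. vertically). -/

theorem noSignalling_comp_general {𝒞 : Type*} [Category 𝒞] [MonoidalCategory 𝒞]
    (A C E B D Q : 𝒞)
    (eA : A ⟶ 𝟙_ 𝒞) (eC : C ⟶ 𝟙_ 𝒞) (eE : E ⟶ 𝟙_ 𝒞)
    (sB : 𝟙_ 𝒞 ⟶ B) (sD : 𝟙_ 𝒞 ⟶ D) (sQ : 𝟙_ 𝒞 ⟶ Q)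
    (F : A ⊗ B ⟶ C ⊗ D) (G : C ⊗ D ⟶ E ⊗ Q)
    (hF₁ : ∃ Fr : B ⟶ D,
      F ≫ (eC ▷ D) ≫ (λ_ D).hom = (eA ▷ B) ≫ (λ_ B).hom ≫ Fr)
    (hF₂ : ∃ Fc : A ⟶ C,
      (ρ_ A).inv ≫ (A ◁ sB) ≫ F = Fc ≫ (ρ_ C).inv ≫ (C ◁ sD))
    (hG₁ : ∃ Gr : D ⟶ Q,
      G ≫ (eE ▷ Q) ≫ (λ_ Q).hom = (eC ▷ D) ≫ (λ_ D).hom ≫ Gr)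
    (hG₂ : ∃ Gc : C ⟶ E,
      (ρ_ C).inv ≫ (C ◁ sD) ≫ G = Gc ≫ (ρ_ E).inv ≫ (E ◁ sQ)) :
    (∃ Hr : B ⟶ Q,
      (F ≫ G) ≫ (eE ▷ Q) ≫ (λ_ Q).hom = (eA ▷ B) ≫ (λ_ B).hom ≫ Hr) ∧
    (∃ Hc : A ⟶ E,
      (ρ_ A).inv ≫ (A ◁ sB) ≫ (F ≫ G) = Hc ≫ (ρ_ E).inv ≫ (E ◁ sQ)) := by
  obtain ⟨Fr, hFr⟩ := hF₁
  obtain ⟨Fc, hFc⟩ := hF₂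
  obtain ⟨Gr, hGr⟩ := hG₁
  obtain ⟨Gc, hGc⟩ := hG₂
  have discardF : CommSq F (eA ▷ B ≫ (λ_ B).hom) (eC ▷ D ≫ (λ_ D).hom) Fr :=
    ⟨hFr.trans (Category.assoc _ _ _).symm⟩
  have discardG : CommSq G (eC ▷ D ≫ (λ_ D).hom) (eE ▷ Q ≫ (λ_ Q).hom) Gr :=
    ⟨hGr.trans (Category.assoc _ _ _).symm⟩
  have prepareF : CommSq ((ρ_ A).inv ≫ A ◁ sB) Fc F ((ρ_ C).inv ≫ C ◁ sD) :=
    ⟨(Category.assoc _ _ _).trans hFc⟩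
  have prepareG : CommSq ((ρ_ C).inv ≫ C ◁ sD) Gc G ((ρ_ E).inv ≫ E ◁ sQ) :=
    ⟨(Category.assoc _ _ _).trans hGc⟩
  refine ⟨⟨Fr ≫ Gr, ?_⟩, ⟨Fc ≫ Gc, ?_⟩⟩
  · simpa only [Category.assoc] using (discardF.horiz_comp discardG).w
  · simpa only [Category.assoc] using (prepareF.vert_comp prepareG).w

/-- Work in a process theory (symmetric monoidal category) with causal systems
`A, C, E` (each equipped with its unique effect `e_•`) and retrocausal systems
`B, D, Q` (each equipped with its unique state `s_•`).  A morphism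
`F : A ⊗ B ⟶ C ⊗ D` is no-signalling if discarding its causal output factors through
discarding its causal input (via some retrocausal process `F_r`), and feeding its
retrocausal input with the unique state factors through the unique state on its
retrocausal output (via some causal process `F_c`).  The class of no-signalling
morphisms is closed under sequential composition: if `F` and `G` are no-signalling
then so is `F ≫ G`. -/
theorem noSignalling_comp {𝒞 : Type*} [Category 𝒞] [MonoidalCategory 𝒞]
    [SymmetricCategory 𝒞]
    (A C E B D Q : 𝒞)
    (eA : A ⟶ 𝟙_ 𝒞) (eC : C ⟶ 𝟙_ 𝒞) (eE : E ⟶ 𝟙_ 𝒞)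
    (sB : 𝟙_ 𝒞 ⟶ B) (sD : 𝟙_ 𝒞 ⟶ D) (sQ : 𝟙_ 𝒞 ⟶ Q)
    (F : A ⊗ B ⟶ C ⊗ D) (G : C ⊗ D ⟶ E ⊗ Q)
    (hF₁ : ∃ Fr : B ⟶ D,
      F ≫ (eC ▷ D) ≫ (λ_ D).hom = (eA ▷ B) ≫ (λ_ B).hom ≫ Fr)
    (hF₂ : ∃ Fc : A ⟶ C,
      (ρ_ A).inv ≫ (A ◁ sB) ≫ F = Fc ≫ (ρ_ C).inv ≫ (C ◁ sD))
    (hG₁ : ∃ Gr : D ⟶ Q,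
      G ≫ (eE ▷ Q) ≫ (λ_ Q).hom = (eC ▷ D) ≫ (λ_ D).hom ≫ Gr)
    (hG₂ : ∃ Gc : C ⟶ E,
      (ρ_ C).inv ≫ (C ◁ sD) ≫ G = Gc ≫ (ρ_ E).inv ≫ (E ◁ sQ)) :
    (∃ Hr : B ⟶ Q,
      (F ≫ G) ≫ (eE ▷ Q) ≫ (λ_ Q).hom = (eA ▷ B) ≫ (λ_ B).hom ≫ Hr) ∧
    (∃ Hc : A ⟶ E,
      (ρ_ A).inv ≫ (A ◁ sB) ≫ (F ≫ G) = Hc ≫ (ρ_ E).inv ≫ (E ◁ sQ)) :=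
  noSignalling_comp_general A C E B D Q eA eC eE sB sD sQ F G hF₁ hF₂ hG₁ hG₂
end
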